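/- For every ε > 0 there is δ > 0 such that whenever x, y ∈ X satisfy Ē(x,y) < δ, there exists N ∈ ℕ (depending on x and y) so that ρ(m_T(x,n), m_T(y,n)) < ε for all n ≥ N. -/

import Mathlib

open Filter MeasureTheory Topology
open scoped ENNReal NNReal

noncomputable def EnDist {X : Type*} [MetricSpace X] (T : X → X) (n : ℕ) (x y : X) : ℝ :=
  ⨅ σ : Equiv.Perm (Fin n), (1 / (n : ℝ)) * ∑ k : Fin n, dist (T^[(k : ℕ)] x) (T^[((σ k) : ℕ)] y)

noncomputable def Ebar {X : Type*} [MetricSpace X] (T : X → X) (x y : X) : ℝ :=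
  Filter.limsup (fun n => EnDist T n x y) Filter.atTop

/-- The empirical measure `m_T(x,n) = (1/n) Σ_{j<n} δ_{T^j x}`. -/
noncomputable def empMeas {X : Type*} [MeasurableSpace X] (T : X → X) (x : X) (n : ℕ) :
    Measure X :=
  ((n : ℝ≥0∞))⁻¹ • ∑ j ∈ Finset.range n, MeasureTheory.Measure.dirac (T^[j] x)

/-!
If some permutation `σ` has average matching cost `Ē_n(x, y) < δ²`, Markov's inequality shows
that all but at most `δ n` of the points `T^k x`, `k < n`, lie within `δ` of their partner
`T^{σ k} y`. Hence for every Borel set `B`, `m_T(x,n)(B) ≤ m_T(y,n)(B^δ) + δ`, and for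
probability measures this one-sided bound already gives `ρ ≤ δ`. As `X` is bounded, `Ē(x,y) < δ²`
forces `Ē_n(x,y) < δ²` for all large `n`; take `δ = ε / 2`.
-/

open Finset Metric
open scoped Classical

section Matching

variable {ι X : Type*} [Fintype ι] [MetricSpace X]

lemma card_filter_mem_le_card_filter_mem_thickening_add (u v : ι → X) (σ : Equiv.Perm ι)
    (ε : ℝ) (B : Set X) :
    #{j | u j ∈ B} ≤ #{j | v j ∈ thickening ε B} + #{j | ε ≤ dist (u j) (v (σ j))} := by
  calc #{j | u j ∈ B}
      ≤ #{j | u j ∈ B ∧ dist (u j) (v (σ j)) < ε} + #{j | ε ≤ dist (u j) (v (σ j))} := by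
        refine (card_le_card fun j hj => ?_).trans (card_union_le _ _)
        by_cases h : ε ≤ dist (u j) (v (σ j)) <;> simp_all
    _ ≤ #{j | v j ∈ thickening ε B} + #{j | ε ≤ dist (u j) (v (σ j))} := by
        refine add_le_add_left (card_le_card_of_injOn σ (fun j hj => ?_) σ.injective.injOn) _
        simp only [coe_filter, mem_univ, true_and, Set.mem_ofPred_eq] at hj ⊢
        exact mem_thickening_iff.2 ⟨u j, hj.1, by rw [dist_comm]; exact hj.2⟩

lemma card_filter_le_mul_le_sum (f : ι → ℝ) (hf : ∀ j, 0 ≤ f j) (ε : ℝ) :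
    (#{j | ε ≤ f j} : ℝ) * ε ≤ ∑ j, f j :=
  calc (#{j | ε ≤ f j} : ℝ) * ε ≤ ∑ j ∈ {j | ε ≤ f j}, f j := by
        simpa using card_nsmul_le_sum _ f ε fun j hj => (mem_filter.1 hj).2
    _ ≤ ∑ j, f j := sum_le_sum_of_subset_of_nonneg (subset_univ _) fun j _ _ => hf j

lemma card_filter_mem_le_card_filter_mem_thickening_add_mul (u v : ι → X)
    (σ : Equiv.Perm ι) {ε : ℝ} (hε : 0 < ε)
    (hsum : ∑ j, dist (u j) (v (σ j)) ≤ Fintype.card ι * ε ^ 2) (B : Set X) :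
    (#{j | u j ∈ B} : ℝ) ≤ #{j | v j ∈ thickening ε B} + Fintype.card ι * ε := by
  have hbad : (#{j | ε ≤ dist (u j) (v (σ j))} : ℝ) ≤ Fintype.card ι * ε := by
    refine le_of_mul_le_mul_right ?_ hε
    calc _ ≤ ∑ j, dist (u j) (v (σ j)) :=
          card_filter_le_mul_le_sum _ (fun _ => dist_nonneg) ε
      _ ≤ _ := by linarith
  calc (#{j | u j ∈ B} : ℝ)
      ≤ #{j | v j ∈ thickening ε B} + #{j | ε ≤ dist (u j) (v (σ j))} := by
        exact_mod_cast card_filter_mem_le_card_filter_mem_thickening_add u v σ ε B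
    _ ≤ #{j | v j ∈ thickening ε B} + Fintype.card ι * ε := by gcongr

end Matching

section EmpiricalMeasure

variable {X : Type*} [MeasurableSpace X] (T : X → X) (x : X) (n : ℕ)

lemma empMeas_apply {B : Set X} (hB : MeasurableSet B) :
    empMeas T x n B = ENNReal.ofReal (#{j : Fin n | T^[j] x ∈ B} / n) := by
  rw [empMeas, Measure.smul_apply, Measure.finsetSum_apply, smul_eq_mul,
    ← Fin.sum_univ_eq_sum_range (fun j => Measure.dirac (T^[j] x) B)]
  simp only [Measure.dirac_apply' _ hB, Set.indicator_apply, Pi.one_apply]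
  rcases n.eq_zero_or_pos with rfl | hn
  · simp
  rw [sum_boole, ENNReal.ofReal_div_of_pos (by positivity), ENNReal.ofReal_natCast,
    ENNReal.ofReal_natCast, ENNReal.div_eq_inv_mul]

lemma isProbabilityMeasure_empMeas (hn : 0 < n) : IsProbabilityMeasure (empMeas T x n) := by
  constructor
  rw [empMeas_apply T x n MeasurableSet.univ]
  simp [hn.ne']

end EmpiricalMeasure

section LevyProkhorov

variable {X : Type*} [MetricSpace X] [MeasurableSpace X] [BorelSpace X] {T : X → X} {x y : X}
  {n : ℕ}

lemma empMeas_le_empMeas_thickening_add (hn : 0 < n) (σ : Equiv.Perm (Fin n)) {ε : ℝ}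
    (hε : 0 < ε) (hsum : ∑ k : Fin n, dist (T^[k] x) (T^[σ k] y) ≤ n * ε ^ 2)
    {B : Set X} (hB : MeasurableSet B) :
    empMeas T x n B ≤ empMeas T y n (thickening ε B) + ENNReal.ofReal ε := by
  have hn' : (0 : ℝ) < n := Nat.cast_pos.2 hn
  have hcount := card_filter_mem_le_card_filter_mem_thickening_add_mul (fun k : Fin n => T^[k] x)
    (fun k : Fin n => T^[k] y) σ hε (by simpa using hsum) B
  rw [empMeas_apply _ _ _ hB, empMeas_apply _ _ _ isOpen_thickening.measurableSet,
    ← ENNReal.ofReal_add (by positivity) hε.le]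
  refine ENNReal.ofReal_le_ofReal ?_
  rw [div_add' _ _ _ hn'.ne', div_le_div_iff_of_pos_right hn']
  simpa [mul_comm] using hcount

lemma levyProkhorovDist_empMeas_le (hn : 0 < n) {δ : ℝ} (hδ : 0 ≤ δ)
    (h : EnDist T n x y < δ ^ 2) : levyProkhorovDist (empMeas T x n) (empMeas T y n) ≤ δ := by
  have := isProbabilityMeasure_empMeas T x n hn
  have := isProbabilityMeasure_empMeas T y n hn
  obtain ⟨σ, hσ⟩ := exists_lt_of_ciInf_lt h
  have hn' : (0 : ℝ) < n := Nat.cast_pos.2 hn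
  have hsum : ∑ k : Fin n, dist (T^[k] x) (T^[σ k] y) < n * δ ^ 2 := by
    rwa [one_div, ← div_eq_inv_mul, div_lt_iff₀' hn'] at hσ
  refine levyProkhorovDist_le_of_forall_le _ _ hδ fun ε B hδε hB => ?_
  exact empMeas_le_empMeas_thickening_add hn σ (hδ.trans_lt hδε) (hsum.le.trans (by gcongr)) hB

end LevyProkhorov

lemma EnDist_le_diam {X : Type*} [MetricSpace X] [BoundedSpace X] (T : X → X) (n : ℕ)
    (x y : X) : EnDist T n x y ≤ diam (Set.univ : Set X) := by
  have hdist (a b : X) : dist a b ≤ diam (Set.univ : Set X) :=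
    dist_le_diam_of_mem BoundedSpace.bounded_univ trivial trivial
  refine (ciInf_le (Set.finite_range _).bddBelow 1).trans ?_
  rcases n.eq_zero_or_pos with rfl | hn
  · simpa using hdist x x
  calc (1 / (n : ℝ)) * ∑ k : Fin n, dist (T^[k] x) (T^[(1 : Equiv.Perm (Fin n)) k] y)
      ≤ (1 / (n : ℝ)) * ∑ _k : Fin n, diam (Set.univ : Set X) := by
        gcongr with k; exact hdist _ _
    _ = diam (Set.univ : Set X) := by field_simp; simp

theorem Ebar_small_implies_eventually_prokhorov_small {X : Type*} [MetricSpace X]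
    [CompactSpace X] [MeasurableSpace X] [BorelSpace X] (T : X → X) :
    ∀ ε > (0 : ℝ), ∃ δ > (0 : ℝ), ∀ x y : X, Ebar T x y < δ →
      ∃ N : ℕ, ∀ n : ℕ, N ≤ n →
        levyProkhorovDist (empMeas T x n) (empMeas T y n) < ε := by
  intro ε hε
  refine ⟨(ε / 2) ^ 2, by positivity, fun x y hxy => ?_⟩
  -- without this bound `limsup` could be the junk value `0` of an unbounded sequence
  have hbdd : IsBoundedUnder (· ≤ ·) atTop (fun n => EnDist T n x y) :=
    isBoundedUnder_of ⟨_, fun n => EnDist_le_diam T n x y⟩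
  obtain ⟨N, hN⟩ := eventually_atTop.1
    ((eventually_lt_of_limsup_lt hxy hbdd).and (eventually_gt_atTop 0))
  refine ⟨N, fun n hn => ?_⟩
  calc levyProkhorovDist (empMeas T x n) (empMeas T y n) ≤ ε / 2 :=
        levyProkhorovDist_empMeas_le (hN n hn).2 (by positivity) (hN n hn).1
    _ < ε := half_lt_self hε
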